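/- Let r, g closed convex proper, f convex differentiable with L-Lipschitz gradient, 0 < α < 3/(2L), and suppose a fixed point z* of the PPG iteration exists. Then for the iterates z^{k+1} = z^k − αp(z^k), the sums Σ_{k=0}^∞ ‖p(z^k)‖² and Σ_{k=0}^∞ ‖∇f(x^{k+1/2}) − ∇f(x*)‖² are finite, and consequently min_{0≤i≤k} ‖p(z^i)‖² ≤ C/k for some constant C depending only on ‖z^0 − z*‖, α, and L. -/

import Mathlib

open Set Filter Topology
open scoped RealInnerProductSpace

noncomputable section

/-- `f` is closed (lower semicontinuous), convex, and proper
as an extended-real-valued function. -/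
def ClosedConvexProper {E : Type*} [NormedAddCommGroup E] [NormedSpace ℝ E]
    (f : E → EReal) : Prop :=
  LowerSemicontinuous f ∧
  (∀ (a b : ℝ) (x y : E), 0 ≤ a → 0 ≤ b → a + b = 1 →
    f (a • x + b • y) ≤ (a : EReal) * f x + (b : EReal) * f y) ∧
  (∀ x, f x ≠ ⊥) ∧ (∃ x, f x ≠ ⊤)

/-- `p` is a minimizer of the prox objective of the extended-real-valued `f` at `x₀`. -/
def IsProxPt {E : Type*} [NormedAddCommGroup E] [InnerProductSpace ℝ E]
    (f : E → EReal) (x₀ p : E) : Prop :=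
  IsMinOn (fun x => f x + ((1 / 2 * ‖x - x₀‖ ^ 2 : ℝ) : EReal)) Set.univ p

/-- `p` is a minimizer of the prox objective of the real-valued `f` at `x₀`. -/
def IsProxPtR {E : Type*} [NormedAddCommGroup E] [InnerProductSpace ℝ E]
    (f : E → ℝ) (x₀ p : E) : Prop :=
  IsMinOn (fun x => f x + 1 / 2 * ‖x - x₀‖ ^ 2) Set.univ p

/-! Both prox maps are firmly nonexpansive and, by the Baillon–Haddad theorem, `∇f` is
`1/L`-cocoercive. Combining these three inequalities at `z k` and at the fixed point `zs`, and
splitting the cross term by Young's inequality with weight `t = (αL + 2)/4`, gives the Fejér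
inequality
  `‖z (k+1) - zs‖² + α²(1-t)‖P (z k)‖² + (2α/L - α²/t)‖f' (Pr (z k)) - f' (Pr zs)‖² ≤ ‖z k - zs‖²`,
whose coefficients are positive because `αL < 2`. Telescoping bounds both series by
`‖z 0 - zs‖²` up to constants, and the smallest of the first `k` terms is at most their average. -/

section ConvexProper

variable {E : Type*} [AddCommGroup E] [Module ℝ E]

def ConvexProper (φ : E → EReal) : Prop :=
  (∀ (a b : ℝ) (x y : E), 0 ≤ a → 0 ≤ b → a + b = 1 →
    φ (a • x + b • y) ≤ (a : EReal) * φ x + (b : EReal) * φ y) ∧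
  (∀ x, φ x ≠ ⊥) ∧ (∃ x, φ x ≠ ⊤)

lemma ConvexProper.const_mul {φ : E → EReal} (hφ : ConvexProper φ) {α : ℝ} (hα : 0 < α) :
    ConvexProper (fun x => (α : EReal) * φ x) := by
  obtain ⟨hconv, hbot, x₀, hx₀⟩ := hφ
  have hα' : (0 : EReal) ≤ α := EReal.coe_nonneg.mpr hα.le
  refine ⟨fun a b x y ha hb hab => ?_, fun x => ?_, x₀, ?_⟩
  · calc (α : EReal) * φ (a • x + b • y) ≤ α * (a * φ x + b * φ y) :=
          mul_le_mul_of_nonneg_left (hconv a b x y ha hb hab) hα'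
      _ = a * (α * φ x) + b * (α * φ y) := by
          rw [EReal.left_distrib_of_nonneg_of_ne_top hα' (EReal.coe_ne_top α),
            mul_left_comm, mul_left_comm (α : EReal)]
  · exact (EReal.mul_ne_bot _ _).mpr
      ⟨.inl (EReal.coe_ne_bot α), .inr (hbot x), .inl (EReal.coe_ne_top α), .inl hα'⟩
  · exact (EReal.mul_ne_top _ _).mpr
      ⟨.inl (EReal.coe_ne_bot α), .inl hα', .inl (EReal.coe_ne_top α), .inr hx₀⟩

end ConvexProper

lemma ClosedConvexProper.convexProper {E : Type*} [NormedAddCommGroup E] [NormedSpace ℝ E]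
    {φ : E → EReal} (h : ClosedConvexProper φ) : ConvexProper φ :=
  h.2

lemma add_le_of_forall_add_one_sub_mul_le {A B C : ℝ}
    (h : ∀ t ∈ Ioo (0 : ℝ) 1, A + (1 - t) * B ≤ C) : A + B ≤ C := by
  have hlim : Tendsto (fun t : ℝ => A + (1 - t) * B) (𝓝[>] 0) (𝓝 (A + B)) := by
    simpa using ((by fun_prop : Continuous fun t : ℝ => A + (1 - t) * B).tendsto 0).mono_left
      nhdsWithin_le_nhds
  exact le_of_tendsto hlim (eventually_of_mem (Ioo_mem_nhdsGT one_pos) h)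

section Prox

variable {E : Type*} [NormedAddCommGroup E] [InnerProductSpace ℝ E]

lemma norm_sub_sq_of_add_eq_one {s t : ℝ} (hst : s + t = 1) (x y w : E) :
    ‖(s • x + t • y) - w‖ ^ 2 = s * ‖x - w‖ ^ 2 + t * ‖y - w‖ ^ 2 - s * t * ‖x - y‖ ^ 2 := by
  have h : (s • x + t • y) - w = s • (x - w) + t • (y - w) := by
    match_scalars <;> linarith
  rw [h, show x - y = (x - w) - (y - w) by abel]
  generalize x - w = a
  generalize y - w = b
  rw [norm_add_sq_real, norm_sub_sq_real, norm_smul, norm_smul, real_inner_smul_left,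
    real_inner_smul_right, Real.norm_eq_abs, Real.norm_eq_abs, mul_pow, mul_pow, sq_abs, sq_abs]
  linear_combination (s * ‖a‖ ^ 2 + t * ‖b‖ ^ 2) * hst

variable {φ : E → EReal} {w p : E}

lemma IsProxPt.ne_top (hφ : ConvexProper φ) (hp : IsProxPt φ w p) : φ p ≠ ⊤ := by
  obtain ⟨-, hbot, x₀, hx₀⟩ := hφ
  intro htop
  have h := isMinOn_iff.mp hp x₀ (mem_univ x₀)
  lift φ x₀ to ℝ using ⟨hx₀, hbot x₀⟩ with ρ
  rw [htop, EReal.top_add_coe, ← EReal.coe_add] at h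
  exact (EReal.coe_lt_top _).not_ge h

lemma IsProxPt.three_point (hφ : ConvexProper φ) (hp : IsProxPt φ w p) {y : E} (hy : φ y ≠ ⊤) :
    (φ p).toReal + 1 / 2 * ‖p - w‖ ^ 2 + 1 / 2 * ‖y - p‖ ^ 2
      ≤ (φ y).toReal + 1 / 2 * ‖y - w‖ ^ 2 := by
  have hp_top := hp.ne_top hφ
  obtain ⟨hconv, hbot, -⟩ := hφ
  -- compare `p` with the points `(1 - t) • p + t • y` of the segment and let `t → 0`
  refine add_le_of_forall_add_one_sub_mul_le fun t ⟨ht0, ht1⟩ => ?_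
  have hmin := isMinOn_iff.mp hp ((1 - t) • p + t • y) (mem_univ _)
  have hcomb := hconv (1 - t) t p y (by linarith) ht0.le (by ring)
  lift φ p to ℝ using ⟨hp_top, hbot p⟩ with ρp
  lift φ y to ℝ using ⟨hy, hbot y⟩ with ρy
  rw [← EReal.coe_mul, ← EReal.coe_mul, ← EReal.coe_add] at hcomb
  lift φ ((1 - t) • p + t • y) to ℝ using ⟨ne_top_of_le_ne_top (EReal.coe_ne_top _) hcomb,
    hbot _⟩ with ρt
  simp only [← EReal.coe_add, EReal.coe_le_coe_iff] at hmin hcomb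
  rw [norm_sub_sq_of_add_eq_one (by ring) p y w, norm_sub_rev p y] at hmin
  rw [EReal.toReal_coe, EReal.toReal_coe]
  refine le_of_mul_le_mul_left ?_ ht0
  nlinarith

lemma IsProxPt.norm_sub_sq_le_inner (hφ : ConvexProper φ) {w' q : E}
    (hp : IsProxPt φ w p) (hq : IsProxPt φ w' q) :
    ‖p - q‖ ^ 2 ≤ ⟪p - q, w - w'⟫ := by
  have hpq := hp.three_point hφ (hq.ne_top hφ)
  have hqp := hq.three_point hφ (hp.ne_top hφ)
  have hpar : ‖q - w‖ ^ 2 + ‖p - w'‖ ^ 2 - ‖p - w‖ ^ 2 - ‖q - w'‖ ^ 2 = 2 * ⟪p - q, w - w'⟫ := by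
    simp only [norm_sub_sq_real, inner_sub_left, inner_sub_right, real_inner_comm]
    ring
  rw [norm_sub_rev q p] at hpq
  linarith

end Prox

section Smooth

variable {E : Type*} [NormedAddCommGroup E] [InnerProductSpace ℝ E] [CompleteSpace E]
  {f : E → ℝ} {f' : E → E}

lemma HasGradientAt.hasDerivAt_comp_lineMap {g x y : E} {t : ℝ}
    (h : HasGradientAt f g (AffineMap.lineMap x y t)) :
    HasDerivAt (fun s => f (AffineMap.lineMap x y s)) ⟪g, y - x⟫ t := by
  simpa [InnerProductSpace.toDual_apply_apply, Function.comp_def] using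
    h.hasFDerivAt.comp_hasDerivAt t AffineMap.hasDerivAt_lineMap

lemma ConvexOn.add_inner_le_of_hasGradientAt {s : Set E} (hf : ConvexOn ℝ s f) {g x y : E}
    (hx : x ∈ s) (hy : y ∈ s) (h : HasGradientAt f g x) : f x + ⟪g, y - x⟫ ≤ f y := by
  have hline : ConvexOn ℝ (AffineMap.lineMap x y ⁻¹' s) (f ∘ AffineMap.lineMap x y) :=
    hf.comp_affineMap _
  have hderiv := HasGradientAt.hasDerivAt_comp_lineMap (t := 0) (y := y) (by simpa using h)
  have := hline.le_slope_of_hasDerivAt (x := 0) (y := 1) (by simpa using hx) (by simpa using hy)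
    one_pos hderiv
  simp only [slope_def_field, Function.comp_apply, AffineMap.lineMap_apply_one,
    AffineMap.lineMap_apply_zero, sub_zero, div_one] at this
  linarith

lemma descent_lemma (hf' : ∀ x, HasGradientAt f (f' x) x) {L : ℝ}
    (hLip : ∀ x y, ‖f' x - f' y‖ ≤ L * ‖x - y‖) (x y : E) :
    f y ≤ f x + ⟪f' x, y - x⟫ + L / 2 * ‖y - x‖ ^ 2 := by
  set ψ : ℝ → ℝ := fun s => f (AffineMap.lineMap x y s) - s * ⟪f' x, y - x⟫
    - L / 2 * ‖y - x‖ ^ 2 * s ^ 2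
  have hψ : ∀ s, HasDerivAt ψ (⟪f' (AffineMap.lineMap x y s), y - x⟫ - ⟪f' x, y - x⟫
      - L / 2 * ‖y - x‖ ^ 2 * (2 * s)) s := fun s => by
    have hlin : HasDerivAt (fun s : ℝ => s * ⟪f' x, y - x⟫) ⟪f' x, y - x⟫ s := by
      simpa using (hasDerivAt_id s).mul_const ⟪f' x, y - x⟫
    have hsq : HasDerivAt (fun s : ℝ => L / 2 * ‖y - x‖ ^ 2 * s ^ 2)
        (L / 2 * ‖y - x‖ ^ 2 * (2 * s)) s :=
      ((hasDerivAt_pow 2 s).const_mul _).congr_deriv (by norm_num)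
    exact (((hf' _).hasDerivAt_comp_lineMap).sub hlin).sub hsq
  have hanti : AntitoneOn ψ (Icc 0 1) := by
    refine antitoneOn_of_deriv_nonpos (convex_Icc 0 1)
      (fun s _ => (hψ s).continuousAt.continuousWithinAt)
      (fun s _ => (hψ s).differentiableAt.differentiableWithinAt) fun s hs => ?_
    rw [interior_Icc] at hs
    have hdist : ‖AffineMap.lineMap x y s - x‖ = s * ‖y - x‖ := by
      rw [AffineMap.lineMap_apply_module', add_sub_cancel_right, norm_smul,
        Real.norm_of_nonneg hs.1.le]
    have hinner : ⟪f' (AffineMap.lineMap x y s) - f' x, y - x⟫ ≤ L * s * ‖y - x‖ ^ 2 :=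
      calc ⟪f' (AffineMap.lineMap x y s) - f' x, y - x⟫
          ≤ ‖f' (AffineMap.lineMap x y s) - f' x‖ * ‖y - x‖ := real_inner_le_norm _ _
        _ ≤ L * ‖AffineMap.lineMap x y s - x‖ * ‖y - x‖ := by gcongr; exact hLip _ _
        _ = L * s * ‖y - x‖ ^ 2 := by rw [hdist]; ring
    rw [(hψ s).deriv, ← inner_sub_left]
    linarith
  have h01 := hanti (left_mem_Icc.mpr zero_le_one) (right_mem_Icc.mpr zero_le_one) zero_le_one
  simp only [ψ, AffineMap.lineMap_apply_zero, AffineMap.lineMap_apply_one] at h01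
  linarith

lemma ConvexOn.add_inner_add_sq_le (hf : ConvexOn ℝ univ f) (hf' : ∀ x, HasGradientAt f (f' x) x)
    {L : ℝ} (hL : 0 < L) (hLip : ∀ x y, ‖f' x - f' y‖ ≤ L * ‖x - y‖) (x y : E) :
    f x + ⟪f' x, y - x⟫ + 1 / (2 * L) * ‖f' y - f' x‖ ^ 2 ≤ f y := by
  -- both convexity at `x` and the descent lemma at `y` bound `f` at the gradient step `u` from `y`
  set u := y - L⁻¹ • (f' y - f' x)
  have hconv := hf.add_inner_le_of_hasGradientAt (mem_univ x) (mem_univ u) (hf' x)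
  have hdesc := descent_lemma hf' hLip y u
  have hux : u - x = (y - x) - L⁻¹ • (f' y - f' x) := by simp only [u]; abel
  have huy : u - y = -(L⁻¹ • (f' y - f' x)) := by simp only [u]; abel
  rw [hux, inner_sub_right, real_inner_smul_right] at hconv
  rw [huy, inner_neg_right, real_inner_smul_right, norm_neg, norm_smul,
    Real.norm_of_nonneg (inv_nonneg.mpr hL.le)] at hdesc
  have hsq : L⁻¹ * ⟪f' y, f' y - f' x⟫ - L⁻¹ * ⟪f' x, f' y - f' x⟫
      = L⁻¹ * ‖f' y - f' x‖ ^ 2 := by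
    rw [← mul_sub, ← inner_sub_left, real_inner_self_eq_norm_sq]
  have hL' : L / 2 * (L⁻¹ * ‖f' y - f' x‖) ^ 2 = 1 / (2 * L) * ‖f' y - f' x‖ ^ 2 := by
    field_simp
  have hL'' : L⁻¹ * ‖f' y - f' x‖ ^ 2 = 2 * (1 / (2 * L) * ‖f' y - f' x‖ ^ 2) := by
    field_simp
  linarith

lemma ConvexOn.inner_gradient_sub_ge (hf : ConvexOn ℝ univ f)
    (hf' : ∀ x, HasGradientAt f (f' x) x)
    {L : ℝ} (hL : 0 < L) (hLip : ∀ x y, ‖f' x - f' y‖ ≤ L * ‖x - y‖) (x y : E) :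
    1 / L * ‖f' y - f' x‖ ^ 2 ≤ ⟪f' y - f' x, y - x⟫ := by
  have hxy := hf.add_inner_add_sq_le hf' hL hLip x y
  have hyx := hf.add_inner_add_sq_le hf' hL hLip y x
  rw [norm_sub_rev, ← neg_sub y x, inner_neg_right] at hyx
  rw [inner_sub_left]
  field_simp at hxy hyx ⊢
  linarith

end Smooth

lemma norm_sub_sub_sq_le {E : Type*} [NormedAddCommGroup E] [InnerProductSpace ℝ E]
    {a b u g : E} {α L t : ℝ} (hα : 0 ≤ α) (ht : 0 < t)
    (ha : ‖a‖ ^ 2 ≤ ⟪a, u⟫) (hb : ‖b‖ ^ 2 ≤ ⟪b, (2 : ℝ) • a - u - α • g⟫)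
    (hg : 1 / L * ‖g‖ ^ 2 ≤ ⟪g, a⟫) :
    ‖u - (a - b)‖ ^ 2 ≤ ‖u‖ ^ 2 - (1 - t) * ‖a - b‖ ^ 2 - (2 * α / L - α ^ 2 / t) * ‖g‖ ^ 2 := by
  have hfirm : ‖a - b‖ ^ 2 + α * ⟪g, b⟫ ≤ ⟪u, a - b⟫ := by
    simp only [inner_sub_right, inner_smul_right, norm_sub_sq_real, real_inner_comm] at hb ⊢
    linarith
  have hcoco : α / L * ‖g‖ ^ 2 ≤ α * ⟪g, a⟫ := by
    simpa [div_eq_mul_one_div α L, mul_assoc] using mul_le_mul_of_nonneg_left hg hα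
  have hyoung : 2 * α * ⟪g, a - b⟫ ≤ α ^ 2 / t * ‖g‖ ^ 2 + t * ‖a - b‖ ^ 2 := by
    have hsq : 0 ≤ ‖α • g - t • (a - b)‖ ^ 2 := sq_nonneg _
    rw [norm_sub_sq_real, norm_smul, norm_smul, real_inner_smul_left, real_inner_smul_right,
      Real.norm_eq_abs, Real.norm_eq_abs, mul_pow, mul_pow, sq_abs, sq_abs] at hsq
    rw [div_mul_eq_mul_div, div_add' _ _ _ ht.ne', le_div_iff₀ ht]
    nlinarith
  have hsplit : α * ⟪g, a - b⟫ = α * ⟪g, a⟫ - α * ⟪g, b⟫ := by rw [inner_sub_right, mul_sub]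
  rw [norm_sub_sq_real]
  linear_combination 2 * hfirm + 2 * hcoco + hyoung - 2 * hsplit

lemma ppg_fejer {E : Type*} [NormedAddCommGroup E] [InnerProductSpace ℝ E] [CompleteSpace E]
    {φ ψ : E → EReal} (hφ : ConvexProper φ) (hψ : ConvexProper ψ)
    {f : E → ℝ} (hf : ConvexOn ℝ univ f) {f' : E → E} (hf' : ∀ x, HasGradientAt f (f' x) x)
    {L : ℝ} (hL : 0 < L) (hLip : ∀ x y, ‖f' x - f' y‖ ≤ L * ‖x - y‖)
    {α : ℝ} (hα : 0 < α) {Pr Pg P : E → E}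
    (hPr : ∀ w, IsProxPt φ w (Pr w)) (hPg : ∀ w, IsProxPt ψ w (Pg w))
    (hP : ∀ z, P z = α⁻¹ • (Pr z - Pg ((2 : ℝ) • Pr z - z - α • f' (Pr z))))
    {zs : E} (hzs : P zs = 0) {t : ℝ} (ht : 0 < t) (w : E) :
    ‖(w - α • P w) - zs‖ ^ 2 ≤ ‖w - zs‖ ^ 2 - α ^ 2 * (1 - t) * ‖P w‖ ^ 2
      - (2 * α / L - α ^ 2 / t) * ‖f' (Pr w) - f' (Pr zs)‖ ^ 2 := by
  have hfix : Pg ((2 : ℝ) • Pr zs - zs - α • f' (Pr zs)) = Pr zs := by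
    have h := hP zs
    rw [hzs, eq_comm, smul_eq_zero_iff_right (inv_ne_zero hα.ne'), sub_eq_zero] at h
    exact h.symm
  set v := (2 : ℝ) • Pr w - w - α • f' (Pr w)
  have hstep : α • P w = (Pr w - Pr zs) - (Pg v - Pr zs) := by
    rw [hP, smul_inv_smul₀ hα.ne']
    abel
  have hg := (hPg v).norm_sub_sq_le_inner hψ (hPg ((2 : ℝ) • Pr zs - zs - α • f' (Pr zs)))
  rw [hfix] at hg
  have key := norm_sub_sub_sq_le hα.le ht ((hPr w).norm_sub_sq_le_inner hφ (hPr zs))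
    (u := w - zs) (g := f' (Pr w) - f' (Pr zs)) (by convert hg using 2; module)
    (hf.inner_gradient_sub_ge hf' hL hLip (Pr zs) (Pr w))
  rw [← hstep, norm_smul, mul_pow, Real.norm_of_nonneg hα.le] at key
  rw [sub_right_comm]
  linarith

lemma sum_range_le_of_add_le {V u : ℕ → ℝ} (hV : ∀ k, 0 ≤ V k) (h : ∀ k, V (k + 1) + u k ≤ V k)
    (n : ℕ) : ∑ k ∈ Finset.range n, u k ≤ V 0 :=
  calc ∑ k ∈ Finset.range n, u k ≤ ∑ k ∈ Finset.range n, (V k - V (k + 1)) :=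
        Finset.sum_le_sum fun k _ => by linarith [h k]
    _ = V 0 - V n := Finset.sum_range_sub' V n
    _ ≤ V 0 := by linarith [hV n]

lemma exists_lt_le_div_of_sum_range_le {u : ℕ → ℝ} {S : ℝ} {k : ℕ} (hk : 1 ≤ k)
    (h : ∑ i ∈ Finset.range k, u i ≤ S) : ∃ i < k, u i ≤ S / k := by
  have hk' : (0 : ℝ) < k := by exact_mod_cast hk
  obtain ⟨i, hi, hle⟩ := Finset.exists_le_of_sum_le ⟨0, Finset.mem_range.mpr hk⟩
    (f := u) (g := fun _ => S / k) (by rwa [Finset.sum_const, Finset.card_range, nsmul_eq_mul,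
      mul_div_cancel₀ _ hk'.ne'])
  exact ⟨i, Finset.mem_range.mp hi, hle⟩

lemma summable_and_exists_le_div_of_add_mul_le {V u : ℕ → ℝ} {c : ℝ} (hc : 0 < c)
    (hV : ∀ k, 0 ≤ V k) (hu : ∀ k, 0 ≤ u k) (h : ∀ k, V (k + 1) + c * u k ≤ V k) :
    Summable u ∧ ∀ k, 1 ≤ k → ∃ i < k, u i ≤ V 0 / c / k := by
  have hsum : ∀ n, ∑ k ∈ Finset.range n, u k ≤ V 0 / c := fun n => by
    rw [le_div_iff₀' hc, Finset.mul_sum]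
    exact sum_range_le_of_add_le hV h n
  exact ⟨summable_of_sum_range_le hu hsum,
    fun k hk => exists_lt_le_div_of_sum_range_le hk (hsum k)⟩

/-- Summability of the squared PPG residuals and the O(1/k) rate. -/
theorem stmt14
    {d : ℕ} (α : ℝ) (hα : 0 < α)
    (r g : EuclideanSpace ℝ (Fin d) → EReal)
    (hr : ClosedConvexProper r) (hg : ClosedConvexProper g)
    (f : EuclideanSpace ℝ (Fin d) → ℝ) (hfconv : ConvexOn ℝ Set.univ f)
    (f' : EuclideanSpace ℝ (Fin d) → EuclideanSpace ℝ (Fin d))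
    (hf' : ∀ x, HasGradientAt f (f' x) x)
    (Pr Pg : EuclideanSpace ℝ (Fin d) → EuclideanSpace ℝ (Fin d))
    (hPr : ∀ w, IsProxPt (fun x => (α : EReal) * r x) w (Pr w))
    (hPg : ∀ w, IsProxPt (fun x => (α : EReal) * g x) w (Pg w))
    (P : EuclideanSpace ℝ (Fin d) → EuclideanSpace ℝ (Fin d))
    (hP : ∀ z, P z = α⁻¹ • (Pr z - Pg ((2 : ℝ) • Pr z - z - α • f' (Pr z))))
    (L : ℝ) (hL : 0 < L)
    (hLip : ∀ x y, ‖f' x - f' y‖ ≤ L * ‖x - y‖)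
    (hαL : α < 3 / (2 * L))
    (z : ℕ → EuclideanSpace ℝ (Fin d))
    (hiter : ∀ k, z (k + 1) = z k - α • P (z k))
    (zs : EuclideanSpace ℝ (Fin d)) (hzs : P zs = 0) :
    Summable (fun k => ‖P (z k)‖ ^ 2) ∧
    Summable (fun k => ‖f' (Pr (z k)) - f' (Pr zs)‖ ^ 2) ∧
    ∃ C : ℝ, ∀ k : ℕ, 1 ≤ k → ∃ i ≤ k, ‖P (z i)‖ ^ 2 ≤ C / k := by
  have hαL₂ : α * L < 2 := by
    have := (lt_div_iff₀ (by positivity)).mp hαL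
    linarith
  set t := (α * L + 2) / 4 with ht_def
  have ht : 0 < t := by positivity
  have hc₁ : 0 < α ^ 2 * (1 - t) := mul_pos (by positivity) (by linarith)
  have hc₂ : 0 < 2 * α / L - α ^ 2 / t := by
    have hgap : 2 * α * t - α ^ 2 * L = α / 2 * (2 - α * L) := by rw [ht_def]; ring
    rw [sub_pos, div_lt_div_iff₀ ht hL]
    nlinarith [mul_pos hα (sub_pos.mpr hαL₂)]
  have hfejer (k : ℕ) := ppg_fejer (hr.convexProper.const_mul hα) (hg.convexProper.const_mul hα)
    hfconv hf' hL hLip hα hPr hPg hP hzs ht (z k)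
  obtain ⟨hres, hrate⟩ := summable_and_exists_le_div_of_add_mul_le
    (V := fun k => ‖z k - zs‖ ^ 2) (u := fun k => ‖P (z k)‖ ^ 2) hc₁
    (fun k => sq_nonneg _) (fun k => sq_nonneg _) fun k => by
      rw [hiter]
      linarith [hfejer k, mul_nonneg hc₂.le (sq_nonneg ‖f' (Pr (z k)) - f' (Pr zs)‖)]
  obtain ⟨hgrad, -⟩ := summable_and_exists_le_div_of_add_mul_le
    (V := fun k => ‖z k - zs‖ ^ 2) (u := fun k => ‖f' (Pr (z k)) - f' (Pr zs)‖ ^ 2) hc₂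
    (fun k => sq_nonneg _) (fun k => sq_nonneg _) fun k => by
      rw [hiter]
      linarith [hfejer k, mul_nonneg hc₁.le (sq_nonneg ‖P (z k)‖)]
  refine ⟨hres, hgrad, ‖z 0 - zs‖ ^ 2 / (α ^ 2 * (1 - t)), fun k hk => ?_⟩
  obtain ⟨i, hi, hle⟩ := hrate k hk
  exact ⟨i, hi.le, hle⟩
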